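/- arXiv:2312.02874 — 6 statements merged into one kernel-verified Lean document; each statement's English description precedes it below -/
import Mathlib

section
/- For every integer n ≥ 1, the function φ_n(x) = ∫₀^π e^{-2x sin η} e^{i·2nη} dη (which is real-valued) satisfies the ordinary differential equation φ_n''(x) + x⁻¹ φ_n'(x) - 4(1 + n²/x²) φ_n(x) = -4/x for all x > 0. -/
/-!
Differentiating under the integral sign, `φ_n'' + x⁻¹ φ_n' - 4(1 + n²/x²) φ_n` is the integral over
`[0, π]` of `e^{-2x sin η} cos(2nη)` times `4 sin² η - 2x⁻¹ sin η - 4 - 4n²/x²`. Using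
`sin² + cos² = 1`, this integrand is `-x⁻²` times the η-derivative of
`e^{-2x sin η} (2n sin(2nη) - 2x cos η cos(2nη))`, whose increment over `[0, π]` is `4x`.
-/

open Real

/-- The universal function `φ_n`. -/
noncomputable def phi (n : ℕ) (x : ℝ) : ℝ :=
  ∫ η in (0:ℝ)..π, Real.exp (-2 * x * Real.sin η) * Real.cos (2 * n * η)

open MeasureTheory

section ExpKernel

variable {s g : ℝ → ℝ} (a b : ℝ)

theorem hasDerivAt_intervalIntegral_exp_mul (hs : Continuous s) (hg : Continuous g) (x₀ : ℝ) :
    HasDerivAt (fun x => ∫ η in a..b, exp (x * s η) * g η)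
      (∫ η in a..b, exp (x₀ * s η) * (s η * g η)) x₀ := by
  have hbound : ∀ η, ∀ x ∈ Metric.ball x₀ 1,
      ‖exp (x * s η) * (s η * g η)‖ ≤ exp ((|x₀| + 1) * |s η|) * |s η * g η| := by
    intro η x hx
    have hx' : |x| ≤ |x₀| + 1 := by
      have := abs_sub_abs_le_abs_sub x x₀
      rw [Metric.mem_ball, Real.dist_eq] at hx
      linarith
    rw [norm_mul, norm_eq_abs, abs_exp, norm_eq_abs]
    refine mul_le_mul_of_nonneg_right (exp_le_exp.2 ?_) (abs_nonneg _)
    calc x * s η ≤ |x| * |s η| := by rw [← abs_mul]; exact le_abs_self _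
      _ ≤ (|x₀| + 1) * |s η| := by gcongr
  refine (intervalIntegral.hasDerivAt_integral_of_dominated_loc_of_deriv_le
    (Metric.ball_mem_nhds x₀ one_pos)
    (.of_forall fun x => (by fun_prop : Continuous _).aestronglyMeasurable)
    ((by fun_prop : Continuous _).intervalIntegrable _ _)
    (by fun_prop : Continuous _).aestronglyMeasurable
    (.of_forall fun η _ => hbound η)
    ((by fun_prop : Continuous _).intervalIntegrable _ _)
    (.of_forall fun η _ x _ => ?_)).2
  simpa only [mul_assoc] using ((hasDerivAt_mul_const (s η)).exp.mul_const (g η))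

theorem deriv_intervalIntegral_exp_mul (hs : Continuous s) (hg : Continuous g) :
    deriv (fun x => ∫ η in a..b, exp (x * s η) * g η)
      = fun x => ∫ η in a..b, exp (x * s η) * (s η * g η) :=
  funext fun x => (hasDerivAt_intervalIntegral_exp_mul a b hs hg x).deriv

end ExpKernel

theorem phi_eq (n : ℕ) :
    phi n = fun x => ∫ η in (0:ℝ)..π, exp (x * (-2 * sin η)) * cos (2 * n * η) := by
  funext x
  unfold phi
  congr 1 with η
  ring_nf

theorem deriv_phi (n : ℕ) :
    deriv (phi n)
      = fun x => ∫ η in (0:ℝ)..π, exp (x * (-2 * sin η)) * (-2 * sin η * cos (2 * n * η)) := by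
  rw [phi_eq]
  exact deriv_intervalIntegral_exp_mul _ _ (by fun_prop) (by fun_prop)

theorem deriv_deriv_phi (n : ℕ) :
    deriv (deriv (phi n)) = fun x => ∫ η in (0:ℝ)..π,
      exp (x * (-2 * sin η)) * (-2 * sin η * (-2 * sin η * cos (2 * n * η))) := by
  rw [deriv_phi]
  exact deriv_intervalIntegral_exp_mul _ _ (by fun_prop) (by fun_prop)

theorem hasDerivAt_exp_mul_sin_primitive (n : ℕ) (x η : ℝ) :
    HasDerivAt
      (fun t => exp (x * (-2 * sin t))
        * (2 * n * sin (2 * n * t) - 2 * x * (cos t * cos (2 * n * t))))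
      (exp (x * (-2 * sin η))
        * ((4 * x ^ 2 * cos η ^ 2 + 2 * x * sin η + 4 * n ^ 2) * cos (2 * n * η))) η := by
  have harg : HasDerivAt (fun t : ℝ => 2 * n * t) (2 * n) η := by
    simpa using (hasDerivAt_id η).const_mul (2 * (n : ℝ))
  have hexp := (((hasDerivAt_sin η).const_mul (-2)).const_mul x).exp
  have hbracket := (harg.sin.const_mul (2 * (n : ℝ))).sub
    (((hasDerivAt_cos η).mul harg.cos).const_mul (2 * x))
  exact (hexp.mul hbracket).congr_deriv (by simp only [Pi.sub_apply, Pi.mul_apply]; ring)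

theorem integral_exp_mul_sin_primitive (n : ℕ) (x : ℝ) :
    ∫ η in (0:ℝ)..π, exp (x * (-2 * sin η))
      * ((4 * x ^ 2 * cos η ^ 2 + 2 * x * sin η + 4 * n ^ 2) * cos (2 * n * η)) = 4 * x := by
  rw [intervalIntegral.integral_eq_sub_of_hasDerivAt
    (fun η _ => hasDerivAt_exp_mul_sin_primitive n x η)
    ((by fun_prop : Continuous _).intervalIntegrable _ _)]
  have hsin : sin (2 * n * π) = 0 := by
    rw [show (2 * n * π : ℝ) = (2 * n : ℕ) * π by push_cast; ring, sin_nat_mul_pi]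
  have hcos : cos (2 * n * π) = 1 := by
    rw [show (2 * n * π : ℝ) = n * (2 * π) by ring, cos_nat_mul_two_pi]
  simp only [sin_pi, cos_pi, sin_zero, cos_zero, hsin, hcos, mul_zero, mul_one, one_mul, mul_neg,
    exp_zero, zero_add, zero_sub, sub_neg_eq_add]
  ring

theorem ode_integrand_eq (n : ℕ) {x : ℝ} (hx : x ≠ 0) (η : ℝ) :
    exp (x * (-2 * sin η)) * (-2 * sin η * (-2 * sin η * cos (2 * n * η)))
        + x⁻¹ * (exp (x * (-2 * sin η)) * (-2 * sin η * cos (2 * n * η)))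
        - 4 * (1 + (n : ℝ) ^ 2 / x ^ 2) * (exp (x * (-2 * sin η)) * cos (2 * n * η))
      = -(x ^ 2)⁻¹ * (exp (x * (-2 * sin η))
          * ((4 * x ^ 2 * cos η ^ 2 + 2 * x * sin η + 4 * n ^ 2) * cos (2 * n * η))) := by
  field_simp
  linear_combination (4 * x ^ 2 * cos (2 * n * η)) * sin_sq_add_cos_sq η

theorem stmt_1_general (n : ℕ) (x : ℝ) (hx : 0 < x) :
    deriv (deriv (phi n)) x + x⁻¹ * deriv (phi n) x
      - 4 * (1 + (n : ℝ)^2 / x^2) * phi n x = -4 / x := by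
  have hint : ∀ f : ℝ → ℝ, Continuous f → IntervalIntegrable f volume 0 π :=
    fun f hf => hf.intervalIntegrable _ _
  rw [deriv_deriv_phi, deriv_phi, phi_eq, ← intervalIntegral.integral_const_mul,
    ← intervalIntegral.integral_const_mul,
    ← intervalIntegral.integral_add (hint _ (by fun_prop)) (hint _ (by fun_prop)),
    ← intervalIntegral.integral_sub (hint _ (by fun_prop)) (hint _ (by fun_prop)),
    intervalIntegral.integral_congr fun η _ => ode_integrand_eq n hx.ne' η,
    intervalIntegral.integral_const_mul, integral_exp_mul_sin_primitive]
  field_simp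

/-- `φ_n` solves `φ'' + x⁻¹ φ' - 4(1 + n²/x²) φ = -4/x` on `(0,∞)`. -/
theorem stmt_1 (n : ℕ) (hn : 1 ≤ n) (x : ℝ) (hx : 0 < x) :
    deriv (deriv (phi n)) x + x⁻¹ * deriv (phi n) x
      - 4 * (1 + (n : ℝ)^2 / x^2) * phi n x = -4 / x :=
  stmt_1_general n x hx
end

section
/- For every integer n ≥ 1 and every x > 0, the quantity φ_n(x) = ∫₀^π e^{-2x sin η} cos(2nη) dη is strictly positive. -/
/-!
Integrating by parts against `sin (2nη) / (2n)` gives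
`φ_n(x) = (x / n) ∫₀^π h(η) sin (2nη) dη` with `h(η) = cos η · e^{-2x sin η}`, and `h` is strictly
decreasing on `[0, π]` since `h' = -(sin η + 2x cos² η) e^{-2x sin η}`. After the substitution
`s = 2nη` this is the sine integral of a strictly decreasing function over `n` full periods.
On each period the two half-periods pair up, `∫₀^{2π} H s sin s ds = ∫₀^π (H s - H (s + π)) sin s ds`,
and the integrand on the right is positive.
-/

open Real

open Set MeasureTheory intervalIntegral

theorem intervalIntegrable_mul_sin_of_antitoneOn {H : ℝ → ℝ} {a b : ℝ}
    (hH : AntitoneOn H (uIcc a b)) : IntervalIntegrable (fun s => H s * sin s) volume a b :=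
  hH.intervalIntegrable.mul_continuousOn continuous_sin.continuousOn

theorem integral_mul_sin_pos_of_strictAntiOn_Icc_zero_two_pi {H : ℝ → ℝ}
    (hH : StrictAntiOn H (Icc 0 (2 * π))) : 0 < ∫ s in 0..2 * π, H s * sin s := by
  have hmem : ∀ s ∈ Icc 0 π, s ∈ Icc 0 (2 * π) ∧ s + π ∈ Icc 0 (2 * π) := fun s hs =>
    ⟨⟨hs.1, by linarith [hs.2, pi_pos]⟩, ⟨by linarith [hs.1, pi_pos], by linarith [hs.2]⟩⟩
  have hshift : AntitoneOn (fun s => H (s + π)) (uIcc 0 π) := fun a ha b hb hab =>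
    hH.antitoneOn (hmem a (uIcc_of_le pi_pos.le ▸ ha)).2 (hmem b (uIcc_of_le pi_pos.le ▸ hb)).2
      (by linarith)
  have hI₁ : IntervalIntegrable (fun s => H s * sin s) volume 0 π :=
    intervalIntegrable_mul_sin_of_antitoneOn <| hH.antitoneOn.mono <| by
      rw [uIcc_of_le pi_pos.le]; exact fun s hs => (hmem s hs).1
  have hI₂ : IntervalIntegrable (fun s => H s * sin s) volume π (2 * π) :=
    intervalIntegrable_mul_sin_of_antitoneOn <| hH.antitoneOn.mono <| by
      rw [uIcc_of_le (by linarith [pi_pos])]; exact Icc_subset_Icc pi_pos.le le_rfl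
  have hI₃ := intervalIntegrable_mul_sin_of_antitoneOn hshift
  have hsecond : ∫ s in π..2 * π, H s * sin s = -∫ s in 0..π, H (s + π) * sin s := by
    have := integral_comp_add_right (fun s => H s * sin s) π (a := 0) (b := π)
    simp only [sin_add_pi, mul_neg, intervalIntegral.integral_neg, zero_add] at this
    rw [two_mul, ← this]
  have hsplit : ∫ s in 0..2 * π, H s * sin s = ∫ s in 0..π, (H s - H (s + π)) * sin s := by
    simp only [sub_mul]
    rw [← integral_add_adjacent_intervals hI₁ hI₂, hsecond, integral_sub hI₁ hI₃, sub_eq_add_neg]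
  rw [hsplit]
  refine intervalIntegral_pos_of_pos_on ?_ (fun s hs => ?_) pi_pos
  · simpa only [sub_mul] using hI₁.sub hI₃
  · obtain ⟨hs₁, hs₂⟩ := hmem s (Ioo_subset_Icc_self hs)
    exact mul_pos (sub_pos.2 (hH hs₁ hs₂ (by linarith [pi_pos])))
      (sin_pos_of_pos_of_lt_pi hs.1 hs.2)

theorem integral_mul_sin_pos_of_strictAntiOn {H : ℝ → ℝ} {m : ℕ} (hm : m ≠ 0)
    (hH : StrictAntiOn H (Icc 0 (m * (2 * π)))) : 0 < ∫ s in 0..m * (2 * π), H s * sin s := by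
  induction m with
  | zero => exact absurd rfl hm
  | succ k ih =>
    rcases eq_or_ne k 0 with rfl | hk
    · simpa using integral_mul_sin_pos_of_strictAntiOn_Icc_zero_two_pi (by simpa using hH)
    set L : ℝ := k * (2 * π)
    have hL₀ : 0 ≤ L := by positivity
    have hL : ((k + 1 : ℕ) : ℝ) * (2 * π) = L + 2 * π := by push_cast; ring
    rw [hL] at hH ⊢
    have hI₁ : IntervalIntegrable (fun s => H s * sin s) volume 0 L :=
      intervalIntegrable_mul_sin_of_antitoneOn <| hH.antitoneOn.mono <| by
        rw [uIcc_of_le hL₀]; exact Icc_subset_Icc le_rfl (by linarith [pi_pos])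
    have hI₂ : IntervalIntegrable (fun s => H s * sin s) volume L (L + 2 * π) :=
      intervalIntegrable_mul_sin_of_antitoneOn <| hH.antitoneOn.mono <| by
        rw [uIcc_of_le (by linarith [pi_pos])]; exact Icc_subset_Icc hL₀ le_rfl
    have hlast : ∫ s in L..L + 2 * π, H s * sin s = ∫ s in 0..2 * π, H (s + L) * sin s := by
      have := integral_comp_add_right (fun s => H s * sin s) L (a := 0) (b := 2 * π)
      simp only [L, sin_add_nat_mul_two_pi, zero_add] at this
      rw [this, add_comm]
    have hshift : StrictAntiOn (fun s => H (s + L)) (Icc 0 (2 * π)) := fun a ha b hb hab =>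
      hH ⟨by linarith [ha.1], by linarith [ha.2]⟩ ⟨by linarith [hb.1], by linarith [hb.2]⟩
        (by linarith)
    rw [← integral_add_adjacent_intervals hI₁ hI₂, hlast]
    exact add_pos (ih hk (hH.mono (Icc_subset_Icc le_rfl (by linarith [pi_pos]))))
      (integral_mul_sin_pos_of_strictAntiOn_Icc_zero_two_pi hshift)

theorem strictAntiOn_cos_mul_exp_neg_mul_sin {x : ℝ} (hx : 0 ≤ x) :
    StrictAntiOn (fun t => cos t * exp (-2 * x * sin t)) (Icc 0 π) := by
  have hderiv : ∀ t, HasDerivAt (fun t => cos t * exp (-2 * x * sin t))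
      (-(sin t + 2 * x * cos t ^ 2) * exp (-2 * x * sin t)) t := fun t =>
    ((hasDerivAt_cos t).mul ((hasDerivAt_sin t).const_mul (-2 * x)).exp).congr_deriv (by ring)
  refine strictAntiOn_of_deriv_neg (convex_Icc 0 π) (by fun_prop) fun t ht => ?_
  rw [interior_Icc] at ht
  rw [(hderiv t).deriv, neg_mul]
  have hsin : 0 < sin t := sin_pos_of_pos_of_lt_pi ht.1 ht.2
  exact neg_neg_of_pos (mul_pos (by positivity) (exp_pos _))

theorem integral_mul_cos_eq_neg_integral_deriv_mul_sin {g g' : ℝ → ℝ} {k : ℕ} (hk : k ≠ 0)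
    (hg : ∀ t ∈ uIcc 0 π, HasDerivAt g (g' t) t) (hg' : IntervalIntegrable g' volume 0 π) :
    ∫ t in 0..π, g t * cos (k * t) = -(∫ t in 0..π, g' t * sin (k * t)) / k := by
  have hk' : (k : ℝ) ≠ 0 := Nat.cast_ne_zero.2 hk
  have hsin : ∀ t, HasDerivAt (fun t => sin (k * t) / k) (cos (k * t)) t := fun t =>
    (((hasDerivAt_id t).const_mul (k : ℝ)).sin.div_const (k : ℝ)).congr_deriv (by simp [hk'])
  rw [intervalIntegral.integral_mul_deriv_eq_deriv_mul hg (fun t _ => hsin t) hg'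
    ((by fun_prop : Continuous fun t => cos (k * t)).intervalIntegrable _ _), sin_nat_mul_pi]
  simp only [mul_zero, sin_zero, zero_div, sub_zero, zero_sub, mul_div_assoc',
    intervalIntegral.integral_div, neg_div]

theorem phi_eq_mul_integral_mul_sin {n : ℕ} (hn : n ≠ 0) (x : ℝ) :
    phi n x = x / n * ∫ t in 0..π, cos t * exp (-2 * x * sin t) * sin (2 * n * t) := by
  have hibp := integral_mul_cos_eq_neg_integral_deriv_mul_sin (k := 2 * n) (by omega)
    (g := fun t => exp (-2 * x * sin t)) (g' := fun t => exp (-2 * x * sin t) * (-2 * x * cos t))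
    (fun t _ => ((hasDerivAt_sin t).const_mul (-2 * x)).exp)
    ((by fun_prop : Continuous fun t => exp (-2 * x * sin t) * (-2 * x * cos t)).intervalIntegrable
      _ _)
  push_cast at hibp
  have hconst : ∫ t in 0..π, exp (-2 * x * sin t) * (-2 * x * cos t) * sin (2 * n * t)
      = -2 * x * ∫ t in 0..π, cos t * exp (-2 * x * sin t) * sin (2 * n * t) := by
    rw [← intervalIntegral.integral_const_mul]
    congr 1 with t
    ring
  have hn' : (n : ℝ) ≠ 0 := Nat.cast_ne_zero.2 hn
  rw [phi, hibp, hconst]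
  field_simp

/-- Positivity of `φ_n` on `(0,∞)`. -/
theorem stmt_2 (n : ℕ) (hn : 1 ≤ n) (x : ℝ) (hx : 0 < x) : 0 < phi n x := by
  have hn₀ : n ≠ 0 := by omega
  have hc : (0 : ℝ) < 2 * n := by positivity
  set h : ℝ → ℝ := fun t => cos t * exp (-2 * x * sin t)
  have hscale : ∫ t in 0..π, h t * sin (2 * n * t)
      = (2 * n : ℝ)⁻¹ * ∫ s in 0..n * (2 * π), h (s / (2 * n)) * sin s := by
    have := integral_comp_mul_left (fun s => h (s / (2 * n)) * sin s) hc.ne' (a := 0) (b := π)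
    simp only [mul_div_cancel_left₀ _ hc.ne', mul_zero, smul_eq_mul] at this
    rw [this, show (2 * n : ℝ) * π = n * (2 * π) by ring]
  have hanti : StrictAntiOn (fun s => h (s / (2 * n))) (Icc 0 (n * (2 * π))) :=
    (strictAntiOn_cos_mul_exp_neg_mul_sin hx.le).comp_strictMonoOn
      (fun a _ b _ hab => div_lt_div_of_pos_right hab hc) fun s hs =>
        ⟨div_nonneg hs.1 hc.le, (div_le_iff₀ hc).2 (by linarith [hs.2])⟩
  rw [phi_eq_mul_integral_mul_sin hn₀, hscale]
  exact mul_pos (by positivity) (mul_pos (by positivity)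
    (integral_mul_sin_pos_of_strictAntiOn hn₀ hanti))
end

section
/- For every integer n ≥ 1 and every x > 0, φ_n(x) > φ_{n+1}(x), i.e. the sequence n ↦ φ_n(x) is strictly decreasing. -/
/-!
`φ_m` solves the inhomogeneous modified Bessel equation `x²φ'' + xφ' = (4x² + 4m²)φ - 4x`: after
differentiating under the integral sign, the difference of the two sides is the integral over
`[0, π]` of an exact derivative. Minimum principle: if `0 ≤ f 0`, `f → 0` at infinity and
`x²f'' + xf' < c f` with `c ≥ 0`, then `f` has no nonpositive local minimum on `(0, ∞)`, so `f > 0`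
there. This gives `φ_m > 0` for `m ≥ 1`, and then `ψ = φ_n - φ_{n+1} > 0`, since
`x²ψ'' + xψ' = (4x² + 4n²)ψ - 4(2n + 1)φ_{n+1}` and `ψ 0 = φ_n 0 ≥ 0`.
-/

open Real

open MeasureTheory Filter Topology Set

theorem IsLocalMin.deriv_deriv_nonneg {f : ℝ → ℝ} {a : ℝ} (hmin : IsLocalMin f a)
    (hc : ContinuousAt f a) : 0 ≤ deriv (deriv f) a := by
  by_contra! hneg
  have hmax : IsLocalMax f a := isLocalMax_of_deriv_deriv_neg hneg hmin.deriv_eq_zero hc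
  have hconst : f =ᶠ[𝓝 a] fun _ => f a := eventuallyEq_of_isMinFilter_of_isMaxFilter hmin hmax
  exact hneg.ne (by simpa using hconst.deriv.deriv_eq)

theorem pos_of_forall_isLocalMin_pos {f : ℝ → ℝ} (hf : ContinuousOn f (Ici 0)) (h0 : 0 ≤ f 0)
    (hlim : Tendsto f atTop (𝓝 0)) (hmin : ∀ y > 0, IsLocalMin f y → 0 < f y)
    {y : ℝ} (hy : 0 < y) : 0 < f y := by
  have nonneg : ∀ w > 0, 0 ≤ f w := by
    intro w hw
    by_contra! hfw
    obtain ⟨M₀, hM₀⟩ := eventually_atTop.mp (hlim.eventually_const_lt hfw)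
    set M := max M₀ w
    have hwM : w ≤ M := le_max_right _ _
    obtain ⟨z, ⟨hz0, hzM⟩, hzmin⟩ := isCompact_Icc.exists_isMinOn
      (nonempty_Icc.mpr (hw.le.trans hwM)) (hf.mono Icc_subset_Ici_self)
    have hzw : f z ≤ f w := hzmin ⟨hw.le, hwM⟩
    have hz0' : 0 < z := hz0.lt_of_ne (by rintro rfl; linarith)
    have hzM' : z < M := hzM.lt_of_ne fun h => by linarith [h ▸ hM₀ M (le_max_left _ _)]
    exact (hmin z hz0' (hzmin.isLocalMin (Icc_mem_nhds hz0' hzM'))).not_ge (hzw.trans hfw.le)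
  by_contra! hle
  have hlocmin : IsLocalMin f y :=
    eventually_of_mem (Ioi_mem_nhds hy) fun w hw => hle.trans (nonneg w hw)
  exact (hmin y hy hlocmin).not_ge hle

theorem pos_of_ode_lt {f f' f'' a b c : ℝ → ℝ} (hf : ∀ y, HasDerivAt f (f' y) y)
    (hf' : ∀ y, HasDerivAt f' (f'' y) y) (h0 : 0 ≤ f 0) (hlim : Tendsto f atTop (𝓝 0))
    (ha : ∀ y > 0, 0 ≤ a y) (hc : ∀ y > 0, 0 ≤ c y)
    (hode : ∀ y > 0, a y * f'' y + b y * f' y < c y * f y) {y : ℝ} (hy : 0 < y) : 0 < f y := by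
  refine pos_of_forall_isLocalMin_pos (fun y _ => (hf y).continuousAt.continuousWithinAt) h0 hlim
    (fun z hz hmin => ?_) hy
  have hderiv : deriv f = f' := funext fun y => (hf y).deriv
  have hf'z : f' z = 0 := hmin.hasDerivAt_eq_zero (hf z)
  have hf''z : 0 ≤ f'' z := by
    simpa [hderiv, (hf' z).deriv] using hmin.deriv_deriv_nonneg (hf z).continuousAt
  by_contra! hfz
  have := hode z hz
  rw [hf'z] at this
  nlinarith [mul_nonneg (ha z hz) hf''z, mul_nonneg (hc z hz) (neg_nonneg.mpr hfz)]

noncomputable def expSinIntegral (g : ℝ → ℝ) (x : ℝ) : ℝ :=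
  ∫ η in (0:ℝ)..π, exp (-2 * x * sin η) * g η

theorem hasDerivAt_expSinIntegral {g : ℝ → ℝ} (hg : IntervalIntegrable g volume 0 π) (x : ℝ) :
    HasDerivAt (expSinIntegral g) (expSinIntegral (fun η => -2 * sin η * g η) x) x := by
  have hexp_le : ∀ η, ∀ y ∈ Metric.ball x 1, exp (-2 * y * sin η) ≤ exp (2 * (|x| + 1)) := by
    intro η y hy
    have hy : |y| ≤ |x| + 1 := by
      have := abs_sub_abs_le_abs_sub y x
      rw [Metric.mem_ball, Real.dist_eq] at hy
      linarith
    have : |y * sin η| ≤ |x| + 1 := by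
      rw [abs_mul]
      nlinarith [abs_sin_le_one η, abs_nonneg y, abs_nonneg (sin η)]
    exact exp_le_exp.mpr (by linarith [neg_abs_le (y * sin η)])
  have key := intervalIntegral.hasDerivAt_integral_of_dominated_loc_of_deriv_le
    (F := fun y η => exp (-2 * y * sin η) * g η)
    (F' := fun y η => exp (-2 * y * sin η) * (-2 * sin η * g η))
    (bound := fun η => exp (2 * (|x| + 1)) * (2 * ‖g η‖)) (Metric.ball_mem_nhds x one_pos)
    (Eventually.of_forall fun y => (by fun_prop : Continuous fun η => exp (-2 * y * sin η))
      |>.aestronglyMeasurable.mul hg.def'.aestronglyMeasurable)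
    (hg.continuousOn_mul (by fun_prop : Continuous fun η => exp (-2 * x * sin η)).continuousOn)
    ((by fun_prop : Continuous fun η => exp (-2 * x * sin η) * (-2 * sin η))
      |>.aestronglyMeasurable.mul hg.def'.aestronglyMeasurable |>.congr
        (Eventually.of_forall fun η => by simp only [Pi.mul_apply]; ring))
    (Eventually.of_forall fun η _ y hy => by
      have hsin : ‖-2 * sin η‖ ≤ 2 := by simpa [norm_mul] using abs_sin_le_one η
      rw [norm_mul, norm_mul, Real.norm_of_nonneg (exp_pos _).le]
      exact mul_le_mul (hexp_le η y hy) (mul_le_mul_of_nonneg_right hsin (norm_nonneg _))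
        (by positivity) (exp_pos _).le)
    ((hg.norm.const_mul 2).const_mul _)
    (Eventually.of_forall fun η _ y _ => by
      simpa [mul_comm, mul_left_comm, mul_assoc] using
        (((hasDerivAt_id y).const_mul (-2 * sin η)).exp).mul_const (g η))
  exact key.2

theorem tendsto_expSinIntegral_atTop {g : ℝ → ℝ} (hg : IntervalIntegrable g volume 0 π) :
    Tendsto (expSinIntegral g) atTop (𝓝 0) := by
  have key := intervalIntegral.tendsto_integral_filter_of_dominated_convergence (fun η => ‖g η‖)
    (F := fun x η => exp (-2 * x * sin η) * g η) (f := fun _ => 0) (l := atTop) (μ := volume)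
    (a := 0) (b := π) ?_ ?_ hg.norm ?_
  · rw [intervalIntegral.integral_zero] at key
    exact key
  · exact Eventually.of_forall fun y => (by fun_prop : Continuous fun η => exp (-2 * y * sin η))
      |>.aestronglyMeasurable.mul hg.def'.aestronglyMeasurable
  · filter_upwards [eventually_ge_atTop 0] with x hx
    refine Eventually.of_forall fun η hη => ?_
    rw [uIoc_of_le pi_pos.le] at hη
    have hsin : 0 ≤ sin η := sin_nonneg_of_nonneg_of_le_pi hη.1.le hη.2
    rw [norm_mul, Real.norm_eq_abs (exp _), abs_exp]
    exact mul_le_of_le_one_left (norm_nonneg _) (exp_le_one_iff.mpr (by nlinarith))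
  · filter_upwards [Measure.ae_ne volume π] with η hηπ hη
    rw [uIoc_of_le pi_pos.le] at hη
    have hsin : 0 < sin η := sin_pos_of_pos_of_lt_pi hη.1 (hη.2.lt_of_ne hηπ)
    have hlin : Tendsto (fun x => -2 * x * sin η) atTop atBot := by
      simpa [mul_comm, mul_assoc] using
        tendsto_id.const_mul_atTop_of_neg (by linarith : -2 * sin η < 0)
    simpa using (tendsto_exp_atBot.comp hlin).mul_const (g η)

theorem phi_apply_zero {m : ℕ} (hm : m ≠ 0) : phi m 0 = 0 := by
  have hm' : (2 * m : ℝ) ≠ 0 := by positivity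
  simp only [phi, mul_zero, zero_mul, exp_zero, one_mul]
  rw [intervalIntegral.integral_comp_mul_left (fun η => cos η) hm', integral_cos]
  simpa [hm] using sin_nat_mul_pi (2 * m)

theorem phi_apply_zero_nonneg (m : ℕ) : 0 ≤ phi m 0 := by
  rcases eq_or_ne m 0 with rfl | hm
  · simp [phi, pi_pos.le]
  · exact (phi_apply_zero hm).ge

theorem integral_phi_ode_integrand (m : ℕ) (x : ℝ) :
    ∫ η in (0:ℝ)..π, exp (-2 * x * sin η) *
      (-(4 * x ^ 2 * cos η ^ 2 + 2 * x * sin η + 4 * m ^ 2) * cos (2 * m * η)) = -4 * x := by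
  set E := fun η => exp (-2 * x * sin η)
  have hE : ∀ η, HasDerivAt E (E η * (-2 * x * cos η)) η := fun η => by
    simpa [E, mul_comm] using ((hasDerivAt_sin η).const_mul (-2 * x)).exp
  have hcos : ∀ η, HasDerivAt (fun η => cos (2 * m * η)) (-sin (2 * m * η) * (2 * m)) η :=
    fun η => by simpa using ((hasDerivAt_id η).const_mul (2 * (m : ℝ))).cos
  have hsin : ∀ η, HasDerivAt (fun η => sin (2 * m * η)) (cos (2 * m * η) * (2 * m)) η :=
    fun η => by simpa using ((hasDerivAt_id η).const_mul (2 * (m : ℝ))).sin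
  have hprimitive : ∀ η,
      HasDerivAt (fun η => E η * (2 * x * cos η * cos (2 * m * η) - 2 * m * sin (2 * m * η)))
        (E η * (-(4 * x ^ 2 * cos η ^ 2 + 2 * x * sin η + 4 * m ^ 2) * cos (2 * m * η))) η := by
    intro η
    refine ((hE η).mul ((((hasDerivAt_cos η).const_mul (2 * x)).mul (hcos η)).sub
      ((hsin η).const_mul (2 * (m : ℝ))))).congr_deriv ?_
    simp only [Pi.mul_apply, Pi.sub_apply]
    ring
  rw [intervalIntegral.integral_eq_sub_of_hasDerivAt (fun η _ => hprimitive η)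
    ((by fun_prop : Continuous _).intervalIntegrable _ _)]
  have hcos_pi : cos (2 * m * π) = 1 := by
    rw [show 2 * (m : ℝ) * π = m * (2 * π) by ring]
    exact cos_nat_mul_two_pi m
  have hsin_pi : sin (2 * m * π) = 0 := by simpa [mul_assoc] using sin_nat_mul_pi (2 * m)
  simp [E, hcos_pi, hsin_pi]
  ring

theorem phi_ode (m : ℕ) (x : ℝ) :
    x ^ 2 * expSinIntegral (fun η => -2 * sin η * (-2 * sin η * cos (2 * m * η))) x
      + x * expSinIntegral (fun η => -2 * sin η * cos (2 * m * η)) x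
      = (4 * x ^ 2 + 4 * m ^ 2) * phi m x - 4 * x := by
  suffices x ^ 2 * expSinIntegral (fun η => -2 * sin η * (-2 * sin η * cos (2 * m * η))) x
      + x * expSinIntegral (fun η => -2 * sin η * cos (2 * m * η)) x
      - (4 * x ^ 2 + 4 * m ^ 2) * phi m x = -4 * x by linarith
  rw [← integral_phi_ode_integrand m x]
  simp only [expSinIntegral, phi, ← intervalIntegral.integral_const_mul]
  rw [← intervalIntegral.integral_add, ← intervalIntegral.integral_sub]
  · refine intervalIntegral.integral_congr fun η _ => ?_
    linear_combination (4 * x ^ 2 * exp (-2 * x * sin η) * cos (2 * m * η)) * sin_sq_add_cos_sq η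
  all_goals exact (by fun_prop : Continuous _).intervalIntegrable _ _

theorem hasDerivAt_phi (m : ℕ) (x : ℝ) :
    HasDerivAt (phi m) (expSinIntegral (fun η => -2 * sin η * cos (2 * m * η)) x) x :=
  hasDerivAt_expSinIntegral ((by fun_prop : Continuous _).intervalIntegrable _ _) x

theorem hasDerivAt_phi_deriv (m : ℕ) (x : ℝ) :
    HasDerivAt (expSinIntegral fun η => -2 * sin η * cos (2 * m * η))
      (expSinIntegral (fun η => -2 * sin η * (-2 * sin η * cos (2 * m * η))) x) x :=
  hasDerivAt_expSinIntegral ((by fun_prop : Continuous _).intervalIntegrable _ _) x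

theorem tendsto_phi_atTop (m : ℕ) : Tendsto (phi m) atTop (𝓝 0) :=
  tendsto_expSinIntegral_atTop ((by fun_prop : Continuous _).intervalIntegrable _ _)

theorem phi_pos {m : ℕ} (hm : m ≠ 0) {x : ℝ} (hx : 0 < x) : 0 < phi m x :=
  pos_of_ode_lt (a := fun y => y ^ 2) (b := fun y => y) (c := fun y => 4 * y ^ 2 + 4 * m ^ 2)
    (hasDerivAt_phi m) (hasDerivAt_phi_deriv m) (phi_apply_zero hm).ge (tendsto_phi_atTop m)
    (fun y _ => sq_nonneg y) (fun y _ => by positivity)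
    (fun y hy => by linarith [phi_ode m y]) hx

theorem stmt_3_general (n : ℕ) (x : ℝ) (hx : 0 < x) :
    phi (n + 1) x < phi n x := by
  have hψ : 0 < phi n x - phi (n + 1) x :=
    pos_of_ode_lt (f := fun y => phi n y - phi (n + 1) y)
      (a := fun y => y ^ 2) (b := fun y => y) (c := fun y => 4 * y ^ 2 + 4 * n ^ 2)
      (fun y => (hasDerivAt_phi n y).sub (hasDerivAt_phi (n + 1) y))
      (fun y => (hasDerivAt_phi_deriv n y).sub (hasDerivAt_phi_deriv (n + 1) y))
      (by simpa [phi_apply_zero n.succ_ne_zero] using phi_apply_zero_nonneg n)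
      (by simpa using (tendsto_phi_atTop n).sub (tendsto_phi_atTop (n + 1)))
      (fun y _ => sq_nonneg y) (fun y _ => by positivity)
      (fun y hy => by
        have hpos := phi_pos n.succ_ne_zero hy
        have hode := phi_ode n y
        have hode' := phi_ode (n + 1) y
        push_cast at hode' ⊢
        linarith [mul_pos (by positivity : (0:ℝ) < 2 * n + 1) hpos]) hx
  linarith

/-- Strict monotonicity in `n` of `φ_n(x)` for each fixed `x > 0`. -/
theorem stmt_3 (n : ℕ) (hn : 1 ≤ n) (x : ℝ) (hx : 0 < x) :
    phi (n + 1) x < phi n x :=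
  stmt_3_general n x hx
end

section
/- Let f : (0,∞) → ℝ be completely monotone (i.e. (-1)^n f^{(n)}(t) ≥ 0 for all n ∈ ℕ, t > 0). Then for every n ∈ ℕ, α ∈ (0,1) and t > 0, one has tⁿ |f^{(n)}(t)| ≤ (n/(1-α))ⁿ f(αt). -/
open Set

private lemma abs_eq_neg_one_pow_mul {k : ℕ} {x : ℝ} (h : 0 ≤ (-1)^k * x) :
    |x| = (-1)^k * x := by
  rcases Nat.even_or_odd k with hk | hk
  · rw [hk.neg_one_pow] at h ⊢
    rw [one_mul] at h ⊢
    exact abs_of_nonneg h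
  · rw [hk.neg_one_pow] at h ⊢
    rw [neg_one_mul] at h ⊢
    exact abs_of_nonpos (by linarith)

private lemma smooth_iter (f : ℝ → ℝ) (hf : ContDiffOn ℝ (⊤ : ℕ∞) f (Set.Ioi 0)) (n : ℕ) :
    ContDiffOn ℝ (⊤ : ℕ∞) (iteratedDeriv n f) (Set.Ioi 0) := by
  induction n with
  | zero => simpa using hf
  | succ n ih =>
      rw [iteratedDeriv_succ]
      exact ih.deriv_of_isOpen isOpen_Ioi (by simp)

private lemma hasDeriv_iter (f : ℝ → ℝ) (hf : ContDiffOn ℝ (⊤ : ℕ∞) f (Set.Ioi 0)) (n : ℕ)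
    {t : ℝ} (ht : 0 < t) :
    HasDerivAt (iteratedDeriv n f) (iteratedDeriv (n+1) f t) t := by
  have hd : DifferentiableAt ℝ (iteratedDeriv n f) t :=
    ((smooth_iter f hf n).contDiffAt (isOpen_Ioi.mem_nhds ht)).differentiableAt (by simp)
  rw [iteratedDeriv_succ]
  exact hd.hasDerivAt

private lemma mvt_iter (f : ℝ → ℝ) (hf : ContDiffOn ℝ (⊤ : ℕ∞) f (Set.Ioi 0)) (n : ℕ)
    {s t : ℝ} (hs : 0 < s) (hst : s < t) :
    ∃ c ∈ Ioo s t, iteratedDeriv n f t - iteratedDeriv n f s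
      = iteratedDeriv (n+1) f c * (t - s) := by
  obtain ⟨c, hc, hceq⟩ := exists_hasDerivAt_eq_slope (iteratedDeriv n f)
    (iteratedDeriv (n+1) f) hst
    ((smooth_iter f hf n).continuousOn.mono (fun x hx => lt_of_lt_of_le hs hx.1))
    (fun x hx => hasDeriv_iter f hf n (lt_trans hs hx.1))
  refine ⟨c, hc, ?_⟩
  rw [hceq, div_mul_eq_mul_div, mul_div_assoc, div_self (by linarith : t - s ≠ 0), mul_one]

private lemma anti_iter (f : ℝ → ℝ) (hf : ContDiffOn ℝ (⊤ : ℕ∞) f (Set.Ioi 0))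
    (hcm : ∀ (n : ℕ), ∀ t > (0:ℝ), 0 ≤ (-1)^n * iteratedDeriv n f t) (n : ℕ)
    {s t : ℝ} (hs : 0 < s) (hst : s < t) :
    (-1)^n * iteratedDeriv n f t ≤ (-1)^n * iteratedDeriv n f s := by
  obtain ⟨c, hc, h1⟩ := mvt_iter f hf n hs hst
  have h2 : 0 ≤ (-1)^(n+1) * iteratedDeriv (n+1) f c := hcm (n+1) c (lt_trans hs hc.1)
  have key : (-1:ℝ)^n * iteratedDeriv n f t - (-1)^n * iteratedDeriv n f s
      = -(((-1)^(n+1) * iteratedDeriv (n+1) f c) * (t - s)) := by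
    linear_combination ((-1:ℝ)^n) * h1
  have h5 : 0 ≤ ((-1)^(n+1) * iteratedDeriv (n+1) f c) * (t - s) :=
    mul_nonneg h2 (by linarith)
  linarith

private lemma key_iter (f : ℝ → ℝ) (hf : ContDiffOn ℝ (⊤ : ℕ∞) f (Set.Ioi 0))
    (hcm : ∀ (n : ℕ), ∀ t > (0:ℝ), 0 ≤ (-1)^n * iteratedDeriv n f t) (n : ℕ)
    {s t : ℝ} (hs : 0 < s) (hst : s < t) :
    (t - s) * ((-1)^(n+1) * iteratedDeriv (n+1) f t) ≤ (-1)^n * iteratedDeriv n f s := by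
  obtain ⟨c, hc, h1⟩ := mvt_iter f hf n hs hst
  have hanti : (-1:ℝ)^(n+1) * iteratedDeriv (n+1) f t
      ≤ (-1)^(n+1) * iteratedDeriv (n+1) f c :=
    anti_iter f hf hcm (n+1) (lt_trans hs hc.1) hc.2
  have heq : (-1:ℝ)^n * iteratedDeriv n f s
      = (-1)^n * iteratedDeriv n f t + (t - s) * ((-1)^(n+1) * iteratedDeriv (n+1) f c) := by
    linear_combination (-((-1:ℝ)^n)) * h1
  have h6 : (t - s) * ((-1:ℝ)^(n+1) * iteratedDeriv (n+1) f t)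
      ≤ (t - s) * ((-1)^(n+1) * iteratedDeriv (n+1) f c) :=
    mul_le_mul_of_nonneg_left hanti (by linarith)
  have h7 := hcm n t (lt_trans hs hst)
  linarith

private lemma main_iter (f : ℝ → ℝ) (hf : ContDiffOn ℝ (⊤ : ℕ∞) f (Set.Ioi 0))
    (hcm : ∀ (n : ℕ), ∀ t > (0:ℝ), 0 ≤ (-1)^n * iteratedDeriv n f t) :
    ∀ (n : ℕ), ∀ α ∈ Set.Ioo (0:ℝ) 1, ∀ t > (0:ℝ),
      t^n * ((-1)^n * iteratedDeriv n f t) ≤ ((n:ℝ) / (1 - α))^n * f (α * t) := by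
  intro n
  induction n with
  | zero =>
      intro α hα t ht
      have h := anti_iter f hf hcm 0 (mul_pos hα.1 ht) (by nlinarith [hα.2] : α * t < t)
      simpa [iteratedDeriv_zero] using h
  | succ n ih =>
      intro α hα t ht
      obtain ⟨hα0, hα1⟩ := hα
      rcases Nat.eq_zero_or_pos n with rfl | hn
      · -- n = 0 : direct from key inequality with s = α t
        have hk := key_iter f hf hcm 0 (mul_pos hα0 ht) (by nlinarith : α * t < t)
        have h1α : (0:ℝ) < 1 - α := by linarith
        norm_num [iteratedDeriv_zero] at hk ⊢
        rw [inv_mul_eq_div, le_div_iff₀ h1α]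
        nlinarith [hk]
      · -- n ≥ 1
        have hm : (1:ℝ) ≤ (n:ℝ) := by exact_mod_cast hn
        set m : ℝ := (n:ℝ) with hmdef
        have h1α : (0:ℝ) < 1 - α := by linarith
        have hm1 : (0:ℝ) < m + 1 := by linarith
        set β : ℝ := 1 - (1 - α)/(m + 1) with hβdef
        have hc0 : 0 < (1 - α)/(m + 1) := div_pos h1α hm1
        have hc2 : (1 - α)/(m + 1) < 1 - α := div_lt_self h1α (by linarith)
        have hαβ : α < β := by rw [hβdef]; linarith
        have hβ1 : β < 1 := by rw [hβdef]; linarith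
        have hβ0 : 0 < β := lt_trans hα0 hαβ
        set γ : ℝ := α / β with hγdef
        have hγ0 : 0 < γ := div_pos hα0 hβ0
        have hγ1 : γ < 1 := (div_lt_one hβ0).2 hαβ
        have hβt : 0 < β * t := mul_pos hβ0 ht
        have hβtlt : β * t < t := by nlinarith
        have hγβ : γ * (β * t) = α * t := by
          rw [hγdef]; field_simp
        set K : ℝ := (m + 1)/(1 - α) with hKdef
        have hK0 : 0 < K := div_pos hm1 h1α
        have hK1 : K * (1 - β) = 1 := by
          rw [hKdef, hβdef]; field_simp; ring
        have hma : (0:ℝ) < m + α := by linarith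
        have hm0 : (0:ℝ) < m := by linarith
        have hβalt : β = (m + α) / (m + 1) := by
          rw [hβdef]; field_simp; ring
        have hγeq : 1 - γ = m * (1 - α) / (m + α) := by
          rw [hγdef, hβalt]
          field_simp [hma.ne', hm1.ne']
          ring
        have hbase : m / (1 - γ) = β * K := by
          rw [hγeq, hβalt, hKdef]
          field_simp [hm0.ne', h1α.ne', hma.ne', hm1.ne']
        have hk := key_iter f hf hcm n hβt hβtlt
        have hih := ih γ ⟨hγ0, hγ1⟩ (β * t) hβt
        rw [hγβ, hbase] at hih
        set A : ℝ := (-1)^(n+1) * iteratedDeriv (n+1) f t with hA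
        set B : ℝ := (-1)^n * iteratedDeriv n f (β * t) with hB
        set F : ℝ := f (α * t) with hF
        -- hih : (β*t)^n * B ≤ (β*K)^n * F
        have htnB : t^n * B ≤ K^n * F := by
          have h8 : β^n * (t^n * B) ≤ β^n * (K^n * F) := by
            calc β^n * (t^n * B) = (β * t)^n * B := by rw [mul_pow]; ring
              _ ≤ (β * K)^n * F := hih
              _ = β^n * (K^n * F) := by rw [mul_pow]; ring
          exact le_of_mul_le_mul_left h8 (pow_pos hβ0 n)
        have hgoal : t^(n+1) * A ≤ K^(n+1) * F := by
          calc t^(n+1) * A = K * (t^n * ((t - β * t) * A)) := by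
                linear_combination (-(t^(n+1) * A)) * hK1
            _ ≤ K * (t^n * B) := by
                refine mul_le_mul_of_nonneg_left ?_ hK0.le
                exact mul_le_mul_of_nonneg_left hk (pow_nonneg ht.le n)
            _ ≤ K * (K^n * F) := mul_le_mul_of_nonneg_left htnB hK0.le
            _ = K^(n+1) * F := by ring
        have hcast : ((n+1 : ℕ) : ℝ) / (1 - α) = K := by
          rw [hKdef]; push_cast; ring
        rw [hcast]
        exact hgoal

/-- Pointwise derivative bounds for completely monotone functions. -/
theorem stmt_12 (f : ℝ → ℝ) (hf : ContDiffOn ℝ (⊤ : ℕ∞) f (Set.Ioi 0))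
    (hcm : ∀ (n : ℕ), ∀ t > (0:ℝ), 0 ≤ (-1)^n * iteratedDeriv n f t) :
    ∀ (n : ℕ), ∀ α ∈ Set.Ioo (0:ℝ) 1, ∀ t > (0:ℝ),
      t^n * |iteratedDeriv n f t| ≤ ((n:ℝ) / (1 - α))^n * f (α * t) := by
  intro n α hα t ht
  rw [abs_eq_neg_one_pow_mul (hcm n t ht)]
  exact main_iter f hf hcm n α hα t ht
end

section
/- Let f be a smooth function on (0,∞) whose derivative f' has constant sign, and suppose ∫₀^{t₀} |f(t)| t^β dt < ∞ for some β > -1 and t₀ > 0. Then ∫₀^{t₀} |f'(t)| t^{1+β} dt ≤ (1+β) ∫₀^{t₀} |f(t)| t^β dt + |f(t₀)| t₀^{1+β}. -/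
open MeasureTheory Set Filter

lemma stmt_14_not_integrable (c η : ℝ) (hc : 0 < c) (hη : 0 < η) :
    ¬ IntegrableOn (fun t : ℝ => c * t⁻¹) (Set.Ioc 0 η) := by
  intro h
  have h2 : IntegrableOn (fun t : ℝ => t⁻¹) (Set.Ioc (0:ℝ) η) := by
    have := h.const_mul c⁻¹
    have heq : (fun t : ℝ => c⁻¹ * (c * t⁻¹)) = fun t : ℝ => t⁻¹ := by
      funext t; field_simp
    rwa [heq] at this
  have h3 : IntegrableOn (fun t : ℝ => t ^ (-1 : ℝ)) (Set.Ioo (0:ℝ) η) := by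
    refine ((h2.mono_set Set.Ioo_subset_Ioc_self).congr_fun ?_ measurableSet_Ioo)
    intro x hx
    exact (Real.rpow_neg_one x).symm
  rw [intervalIntegral.integrableOn_Ioo_rpow_iff hη] at h3
  linarith

lemma stmt_14_aux (f : ℝ → ℝ) (hf : ContDiffOn ℝ (⊤ : ℕ∞) f (Set.Ioi 0))
    (β : ℝ) (hβ : -1 < β) (t₀ : ℝ) (ht₀ : 0 < t₀)
    (hpos : ∀ t ∈ Set.Ioc (0:ℝ) t₀, 0 ≤ deriv f t)
    (hint : IntegrableOn (fun t => |f t| * t ^ β) (Set.Ioc 0 t₀)) :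
    (∫⁻ t in Set.Ioc (0:ℝ) t₀, ENNReal.ofReal (|deriv f t| * t ^ (1 + β)))
      ≤ ENNReal.ofReal
        ((1 + β) * (∫ t in Set.Ioc (0:ℝ) t₀, |f t| * t ^ β) + |f t₀| * t₀ ^ (1 + β)) := by
  have h1β : (0:ℝ) < 1 + β := by linarith
  set C : ℝ := (1 + β) * (∫ t in Set.Ioc (0:ℝ) t₀, |f t| * t ^ β) + |f t₀| * t₀ ^ (1 + β)
    with hCdef
  have hfc : ContinuousOn f (Set.Ioi 0) := hf.continuousOn
  have hf'c : ContinuousOn (deriv f) (Set.Ioi 0) :=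
    hf.continuousOn_deriv_of_isOpen isOpen_Ioi (by simp)
  have hfd : DifferentiableOn ℝ f (Set.Ioi 0) := hf.differentiableOn (by simp)
  have hderiv : ∀ x ∈ Set.Ioi (0:ℝ), HasDerivAt f (deriv f x) x := fun x hx =>
    (hfd.differentiableAt (isOpen_Ioi.mem_nhds hx)).hasDerivAt
  have hmono : MonotoneOn f (Set.Ioc 0 t₀) := by
    apply monotoneOn_of_deriv_nonneg (convex_Ioc 0 t₀) (hfc.mono fun x hx => hx.1) ?_ ?_
    · rw [interior_Ioc]; exact hfd.mono fun x hx => hx.1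
    · rw [interior_Ioc]; exact fun x hx => hpos x ⟨hx.1, hx.2.le⟩
  have hw_nn : ∀ᵐ t ∂(volume.restrict (Set.Ioc (0:ℝ) t₀)), 0 ≤ |f t| * t ^ β := by
    filter_upwards [ae_restrict_mem measurableSet_Ioc] with t ht
    exact mul_nonneg (abs_nonneg _) (Real.rpow_nonneg ht.1.le _)
  -- Key per-ε bound via integration by parts
  have key : ∀ ε, ε ∈ Set.Ioc (0:ℝ) t₀ →
      (∫⁻ t in Set.Ioc ε t₀, ENNReal.ofReal (|deriv f t| * t ^ (1 + β)))
        ≤ ENNReal.ofReal (C + |f ε| * ε ^ (1 + β)) := by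
    intro ε hεmem
    obtain ⟨hε0, hεt⟩ := hεmem
    have hIcc : Set.Icc ε t₀ ⊆ Set.Ioi (0:ℝ) := fun x hx => lt_of_lt_of_le hε0 hx.1
    have hIoc : Set.Ioc ε t₀ ⊆ Set.Ioi (0:ℝ) := fun x hx => hε0.trans hx.1
    have hrpow_cont : ContinuousOn (fun t : ℝ => t ^ (1 + β)) (Set.Icc ε t₀) :=
      (Real.continuous_rpow_const h1β.le).continuousOn
    have hgcont : ContinuousOn (fun t => |deriv f t| * t ^ (1 + β)) (Set.Icc ε t₀) :=
      ((hf'c.mono hIcc).abs).mul hrpow_cont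
    have hgint : IntegrableOn (fun t => |deriv f t| * t ^ (1 + β)) (Set.Ioc ε t₀) :=
      (hgcont.integrableOn_Icc).mono_set Set.Ioc_subset_Icc_self
    have hgnn : ∀ᵐ t ∂(volume.restrict (Set.Ioc ε t₀)), 0 ≤ |deriv f t| * t ^ (1 + β) := by
      filter_upwards [ae_restrict_mem measurableSet_Ioc] with t ht
      exact mul_nonneg (abs_nonneg _) (Real.rpow_nonneg (hIoc ht).le _)
    rw [← ofReal_integral_eq_lintegral_ofReal hgint hgnn]
    apply ENNReal.ofReal_le_ofReal
    -- replace |f'| by f'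
    have e1 : (∫ t in Set.Ioc ε t₀, |deriv f t| * t ^ (1 + β))
        = ∫ t in Set.Ioc ε t₀, t ^ (1 + β) * deriv f t := by
      refine setIntegral_congr_fun measurableSet_Ioc fun t ht => ?_
      rw [abs_of_nonneg (hpos t ⟨hε0.trans ht.1, ht.2⟩), mul_comm]
    -- integration by parts
    have hu' : IntervalIntegrable (fun x : ℝ => (1 + β) * x ^ β) volume ε t₀ := by
      apply ContinuousOn.intervalIntegrable
      rw [Set.uIcc_of_le hεt]
      exact continuousOn_const.mul ((continuousOn_id.rpow_const
        fun x hx => Or.inl (ne_of_gt (hIcc hx))))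
    have hv' : IntervalIntegrable (deriv f) volume ε t₀ := by
      apply ContinuousOn.intervalIntegrable
      rw [Set.uIcc_of_le hεt]
      exact hf'c.mono hIcc
    have hibp : (∫ x in ε..t₀, x ^ (1 + β) * deriv f x)
        = t₀ ^ (1 + β) * f t₀ - ε ^ (1 + β) * f ε
          - ∫ x in ε..t₀, ((1 + β) * x ^ β) * f x := by
      apply intervalIntegral.integral_mul_deriv_eq_deriv_mul_of_hasDerivAt
      · rw [Set.uIcc_of_le hεt]; exact hrpow_cont
      · rw [Set.uIcc_of_le hεt]; exact hfc.mono hIcc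
      · intro x hx
        rw [min_eq_left hεt, max_eq_right hεt] at hx
        have hx0 : (0:ℝ) < x := lt_trans hε0 hx.1
        have := Real.hasDerivAt_rpow_const (p := 1 + β) (Or.inl hx0.ne')
        simpa [show (1:ℝ) + β - 1 = β by ring] using this
      · intro x hx
        rw [min_eq_left hεt, max_eq_right hεt] at hx
        exact hderiv x (lt_trans hε0 hx.1)
      · exact hu'
      · exact hv'
    have e2 : (∫ x in ε..t₀, x ^ (1 + β) * deriv f x)
        = ∫ t in Set.Ioc ε t₀, t ^ (1 + β) * deriv f t :=
      intervalIntegral.integral_of_le hεt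
    have e3 : (∫ x in ε..t₀, ((1 + β) * x ^ β) * f x)
        = (1 + β) * ∫ t in Set.Ioc ε t₀, t ^ β * f t := by
      rw [intervalIntegral.integral_of_le hεt]
      simp_rw [mul_assoc]
      exact integral_const_mul _ _
    -- bounds
    have hintε : IntegrableOn (fun t => |f t| * t ^ β) (Set.Ioc ε t₀) :=
      hint.mono_set (Set.Ioc_subset_Ioc_left hε0.le)
    have hlhs_int : IntegrableOn (fun t => t ^ β * f t) (Set.Ioc ε t₀) := by
      refine (ContinuousOn.integrableOn_Icc ?_).mono_set Set.Ioc_subset_Icc_self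
      exact ((continuousOn_id.rpow_const fun x hx => Or.inl (ne_of_gt (hIcc hx)))).mul
        (hfc.mono hIcc)
    have b1 : (∫ t in Set.Ioc ε t₀, -(|f t| * t ^ β)) ≤ ∫ t in Set.Ioc ε t₀, t ^ β * f t := by
      refine setIntegral_mono_on hintε.neg hlhs_int measurableSet_Ioc fun t ht => ?_
      have htpos : (0:ℝ) < t := hIoc ht
      have h1 : -|f t| ≤ f t := neg_abs_le _
      have h2 : (0:ℝ) ≤ t ^ β := Real.rpow_nonneg htpos.le _
      nlinarith [mul_le_mul_of_nonneg_right h1 h2]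
    have b2 : (∫ t in Set.Ioc ε t₀, |f t| * t ^ β) ≤ ∫ t in Set.Ioc (0:ℝ) t₀, |f t| * t ^ β :=
      setIntegral_mono_set hint hw_nn ((Set.Ioc_subset_Ioc_left hε0.le).eventuallyLE)
    rw [integral_neg] at b1
    have b1' : -(∫ t in Set.Ioc ε t₀, t ^ β * f t) ≤ ∫ t in Set.Ioc ε t₀, |f t| * t ^ β := by
      linarith
    have b3 : t₀ ^ (1 + β) * f t₀ ≤ |f t₀| * t₀ ^ (1 + β) := by
      rw [mul_comm]
      exact mul_le_mul_of_nonneg_right (le_abs_self _) (Real.rpow_nonneg ht₀.le _)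
    have b4 : -(ε ^ (1 + β) * f ε) ≤ |f ε| * ε ^ (1 + β) := by
      have h := mul_le_mul_of_nonneg_right (neg_le_abs (f ε)) (Real.rpow_nonneg hε0.le (1 + β))
      nlinarith [h]
    have b5 : (1 + β) * (-(∫ t in Set.Ioc ε t₀, t ^ β * f t))
        ≤ (1 + β) * (∫ t in Set.Ioc (0:ℝ) t₀, |f t| * t ^ β) :=
      mul_le_mul_of_nonneg_left (b1'.trans b2) h1β.le
    rw [e1, ← e2, hibp, e3, hCdef]
    nlinarith [b3, b4, b5]
  -- boundary smallness claim
  have claim : ∀ δ > (0:ℝ), ∀ η > (0:ℝ),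
      ∃ ε, ε ∈ Set.Ioc (0:ℝ) t₀ ∧ ε ≤ η ∧ |f ε| * ε ^ (1 + β) < δ := by
    intro δ hδ η hη
    by_cases hcase : ∀ t ∈ Set.Ioc (0:ℝ) t₀, 0 ≤ f t
    · -- f nonnegative on (0,t₀]
      have habs : (0:ℝ) < |f t₀| + 1 := by positivity
      have htend : Tendsto (fun x : ℝ => x ^ (1 + β)) (nhdsWithin 0 (Set.Ioi 0)) (nhds 0) := by
        have h0 : Tendsto (fun x : ℝ => x ^ (1 + β)) (nhds 0) (nhds ((0:ℝ) ^ (1 + β))) :=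
          (Real.continuousAt_rpow_const 0 (1 + β) (Or.inr h1β.le)).tendsto
        rw [Real.zero_rpow h1β.ne'] at h0
        exact h0.mono_left nhdsWithin_le_nhds
      have h2 : ∀ᶠ x in nhdsWithin (0:ℝ) (Set.Ioi 0), x ^ (1 + β) < δ / (|f t₀| + 1) :=
        htend.eventually_lt_const (by positivity)
      have h3 : ∀ᶠ x in nhdsWithin (0:ℝ) (Set.Ioi 0), x ∈ Set.Ioo (0:ℝ) (min η t₀) :=
        Filter.eventually_of_mem (Ioo_mem_nhdsGT_of_mem ⟨le_refl (0:ℝ), lt_min hη ht₀⟩) (fun x hx => hx)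
      obtain ⟨ε, hε1, hε2⟩ := (h2.and h3).exists
      obtain ⟨hε0, hεlt⟩ := hε2
      have hεt : ε ≤ t₀ := le_of_lt (lt_of_lt_of_le hεlt (min_le_right _ _))
      refine ⟨ε, ⟨hε0, hεt⟩, le_of_lt (lt_of_lt_of_le hεlt (min_le_left _ _)), ?_⟩
      have h4 : f ε ≤ f t₀ := hmono ⟨hε0, hεt⟩ ⟨ht₀, le_refl _⟩ hεt
      have h5 : |f ε| ≤ |f t₀| + 1 := by
        rw [abs_of_nonneg (hcase ε ⟨hε0, hεt⟩)]
        have := le_abs_self (f t₀); linarith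
      calc |f ε| * ε ^ (1 + β) ≤ (|f t₀| + 1) * ε ^ (1 + β) :=
            mul_le_mul_of_nonneg_right h5 (Real.rpow_nonneg hε0.le _)
        _ < (|f t₀| + 1) * (δ / (|f t₀| + 1)) := by
            exact mul_lt_mul_of_pos_left hε1 habs
        _ = δ := by field_simp
    · -- f takes a negative value
      push_neg at hcase
      obtain ⟨a, ha, hfa⟩ := hcase
      by_contra hcon
      push_neg at hcon
      set η' := min η a with hη'def
      have hη'pos : 0 < η' := lt_min hη ha.1
      have hbound : ∀ t ∈ Set.Ioc (0:ℝ) η', δ * t⁻¹ ≤ |f t| * t ^ β := by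
        intro t ht
        have ht0 : 0 < t := ht.1
        have htt₀ : t ≤ t₀ := le_trans ht.2 (le_trans (min_le_right _ _) ha.2)
        have h1 : δ ≤ |f t| * t ^ (1 + β) :=
          hcon t ⟨ht0, htt₀⟩ (le_trans ht.2 (min_le_left _ _))
        have h2 : δ * t⁻¹ ≤ |f t| * t ^ (1 + β) * t⁻¹ :=
          mul_le_mul_of_nonneg_right h1 (inv_nonneg.2 ht0.le)
        have h3 : |f t| * t ^ (1 + β) * t⁻¹ = |f t| * t ^ β := by
          rw [mul_assoc, ← Real.rpow_neg_one t, ← Real.rpow_add ht0]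
          ring_nf
        linarith [h2, h3.le, h3.ge]
      have hii : IntegrableOn (fun t : ℝ => δ * t⁻¹) (Set.Ioc 0 η') := by
        have hsub : Set.Ioc (0:ℝ) η' ⊆ Set.Ioc (0:ℝ) t₀ :=
          Set.Ioc_subset_Ioc_right (le_trans (min_le_right _ _) ha.2)
        refine Integrable.mono (hint.mono_set hsub)
          ((measurable_const.mul measurable_inv).aestronglyMeasurable) ?_
        filter_upwards [ae_restrict_mem measurableSet_Ioc] with t ht
        have ht0 : 0 < t := ht.1
        rw [Real.norm_eq_abs, Real.norm_eq_abs,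
          abs_of_nonneg (mul_nonneg hδ.le (inv_nonneg.2 ht0.le)),
          abs_of_nonneg (mul_nonneg (abs_nonneg _) (Real.rpow_nonneg ht0.le _))]
        exact hbound t ht
      exact stmt_14_not_integrable δ η' hδ hη'pos hii
  -- conclusion via continuity from below
  have hGmeas : Measurable (fun t : ℝ => ENNReal.ofReal (|deriv f t| * t ^ (1 + β))) :=
    ((measurable_deriv f).abs.mul (Real.continuous_rpow_const h1β.le).measurable).ennreal_ofReal
  refine ENNReal.le_of_forall_pos_le_add fun η hη _ => ?_
  have hηR : (0:ℝ) < (η : ℝ) := hη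
  have hseq : ∀ n : ℕ, ∃ ε, ε ∈ Set.Ioc (0:ℝ) t₀ ∧ ε ≤ 1 / (n + 1 : ℝ)
      ∧ |f ε| * ε ^ (1 + β) < (η : ℝ) :=
    fun n => claim (η : ℝ) hηR (1 / (n + 1 : ℝ)) (by positivity)
  choose e he hle hlt using hseq
  have hUnion : Set.Ioc (0:ℝ) t₀ = ⋃ n, Set.Ioc (e n) t₀ := by
    ext x
    simp only [Set.mem_iUnion, Set.mem_Ioc]
    constructor
    · rintro ⟨hx0, hxt⟩
      obtain ⟨n, hn⟩ := exists_nat_one_div_lt hx0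
      exact ⟨n, lt_of_le_of_lt (hle n) hn, hxt⟩
    · rintro ⟨n, h1, h2⟩
      exact ⟨(he n).1.trans h1, h2⟩
  have hdir : Directed (· ⊆ ·) (fun n => Set.Ioc (e n) t₀) := by
    intro m n
    rcases le_total (e m) (e n) with h | h
    · exact ⟨m, subset_rfl, Set.Ioc_subset_Ioc_left h⟩
    · exact ⟨n, Set.Ioc_subset_Ioc_left h, subset_rfl⟩
  calc (∫⁻ t in Set.Ioc (0:ℝ) t₀, ENNReal.ofReal (|deriv f t| * t ^ (1 + β)))
      = volume.withDensity (fun t => ENNReal.ofReal (|deriv f t| * t ^ (1 + β)))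
          (Set.Ioc 0 t₀) := (withDensity_apply _ measurableSet_Ioc).symm
    _ = ⨆ n, volume.withDensity (fun t => ENNReal.ofReal (|deriv f t| * t ^ (1 + β)))
          (Set.Ioc (e n) t₀) := by rw [hUnion]; exact hdir.measure_iUnion
    _ ≤ ENNReal.ofReal C + η := by
        refine iSup_le fun n => ?_
        rw [withDensity_apply _ measurableSet_Ioc]
        refine le_trans (key (e n) (he n)) ?_
        calc ENNReal.ofReal (C + |f (e n)| * (e n) ^ (1 + β))
            ≤ ENNReal.ofReal (C + (η : ℝ)) := ENNReal.ofReal_le_ofReal (by linarith [hlt n])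
          _ ≤ ENNReal.ofReal C + ENNReal.ofReal (η : ℝ) := ENNReal.ofReal_add_le
          _ = ENNReal.ofReal C + η := by rw [ENNReal.ofReal_coe_nnreal]

/-- Weighted integrability propagation: if `f'` has constant sign and `∫₀^{t₀} |f| t^β < ∞`,
then `∫₀^{t₀} |f'(t)| t^{1+β} dt ≤ (1+β)∫₀^{t₀} |f(t)| t^β dt + |f(t₀)| t₀^{1+β}`. -/
theorem stmt_14 (f : ℝ → ℝ) (hf : ContDiffOn ℝ (⊤ : ℕ∞) f (Set.Ioi 0))
    (β : ℝ) (hβ : -1 < β) (t₀ : ℝ) (ht₀ : 0 < t₀)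
    (hsign : (∀ t ∈ Set.Ioc (0:ℝ) t₀, 0 ≤ deriv f t) ∨ (∀ t ∈ Set.Ioc (0:ℝ) t₀, deriv f t ≤ 0))
    (hint : IntegrableOn (fun t => |f t| * t ^ β) (Set.Ioc 0 t₀)) :
    (∫⁻ t in Set.Ioc (0:ℝ) t₀, ENNReal.ofReal (|deriv f t| * t ^ (1 + β)))
      ≤ ENNReal.ofReal
        ((1 + β) * (∫ t in Set.Ioc (0:ℝ) t₀, |f t| * t ^ β) + |f t₀| * t₀ ^ (1 + β)) := by
  rcases hsign with hpos | hneg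
  · exact stmt_14_aux f hf β hβ t₀ ht₀ hpos hint
  · have h := stmt_14_aux (fun t => -f t) hf.neg β hβ t₀ ht₀
      (fun t ht => by rw [deriv.fun_neg]; linarith [hneg t ht])
      (by simpa using hint)
    simpa [deriv.fun_neg, abs_neg] using h
end

section
/- Let b > 0 and R : ℝ → ℝ be 2π-periodic and continuously differentiable with R(θ) = √(b² + 2r(θ)) where ‖r‖_{C¹} ≤ ε₀ and ε₀ > 0 is sufficiently small (depending only on b). Then for all θ, η ∈ ℝ: b|sin((θ-η)/2)| ≤ |R(θ)e^{iθ} - R(η)e^{iη}| ≤ 3b|sin((θ-η)/2)|. -/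
/-!
Write `a = R(θ)`, `c = R(η)` and `s = |sin ((θ - η) / 2)|`. Then
`‖a e^{iθ} - c e^{iη}‖² = (a - c)² + 4 a c s²`. With `ε₀ = b² / 4`, both `a²` and `c²` lie within
`b² / 2` of `b²`, so `b² ≤ 4 a c ≤ 6 b²`, which gives the lower bound. For the upper bound,
`(a - c)(a + c) = 2 (r θ - r η)`, and by the mean value theorem, periodicity and Jordan's inequality
`|r θ - r η| ≤ ε₀ π s`; since `a + c ≥ b` this yields `(a - c)² ≤ (π² / 4) b² s² ≤ 3 b² s²`.
-/

open Real

theorem norm_ofReal_mul_exp_sub_sq (a c θ η : ℝ) :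
    ‖(a : ℂ) * Complex.exp (Complex.I * θ) - c * Complex.exp (Complex.I * η)‖ ^ 2
      = (a - c) ^ 2 + 4 * a * c * sin ((θ - η) / 2) ^ 2 := by
  rw [mul_comm Complex.I, mul_comm Complex.I, Complex.sq_norm, Complex.exp_mul_I,
    Complex.exp_mul_I]
  simp only [Complex.normSq_apply, Complex.sub_re, Complex.mul_re, Complex.ofReal_re,
    Complex.add_re, Complex.cos_ofReal_re, Complex.sin_ofReal_re, Complex.I_re, mul_zero,
    Complex.sin_ofReal_im, Complex.I_im, mul_one, sub_self, add_zero, Complex.ofReal_im,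
    Complex.add_im, Complex.cos_ofReal_im, Complex.mul_im, zero_add, zero_mul, sub_zero,
    Complex.sub_im]
  have hcos := cos_two_mul_eq_one_sub ((θ - η) / 2)
  rw [mul_div_cancel₀ _ two_ne_zero, cos_sub] at hcos
  linear_combination a ^ 2 * sin_sq_add_cos_sq θ + c ^ 2 * sin_sq_add_cos_sq η - 2 * a * c * hcos

theorem abs_le_pi_mul_abs_sin_half {x : ℝ} (hx : |x| ≤ π) : |x| ≤ π * |sin (x / 2)| := by
  have h := mul_abs_le_abs_sin (x := x / 2) (by rw [abs_div, abs_two]; linarith)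
  rw [abs_div, abs_two] at h
  have := pi_pos
  rw [div_mul_div_comm, div_le_iff₀ (by positivity)] at h
  linarith

theorem exists_abs_sub_int_mul_two_pi_le (x : ℝ) : ∃ k : ℤ, |x - k * (2 * π)| ≤ π := by
  refine ⟨round (x / (2 * π)), ?_⟩
  have h2π : 0 < 2 * π := by positivity
  have h := abs_sub_round (x / (2 * π))
  rw [show x - round (x / (2 * π)) * (2 * π) = (x / (2 * π) - round (x / (2 * π))) * (2 * π) by
    field_simp, abs_mul, abs_of_pos h2π]
  nlinarith

theorem abs_sin_half_sub_int_mul_two_pi (x : ℝ) (k : ℤ) :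
    |sin ((x - k * (2 * π)) / 2)| = |sin (x / 2)| := by
  rw [show (x - k * (2 * π)) / 2 = x / 2 + (-k : ℤ) * π by push_cast; ring,
    sin_add_int_mul_pi, abs_mul, abs_zpow, abs_neg, abs_one, one_zpow, one_mul]

theorem exists_abs_sub_int_mul_two_pi_le_pi_mul_abs_sin_half (x : ℝ) :
    ∃ k : ℤ, |x - k * (2 * π)| ≤ π * |sin (x / 2)| := by
  obtain ⟨k, hk⟩ := exists_abs_sub_int_mul_two_pi_le x
  exact ⟨k, abs_sin_half_sub_int_mul_two_pi x k ▸ abs_le_pi_mul_abs_sin_half hk⟩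

theorem Function.Periodic.abs_sub_le_mul_pi_mul_abs_sin_half {f : ℝ → ℝ} {L : ℝ}
    (hf : Function.Periodic f (2 * π)) (hL : 0 ≤ L) (hlip : ∀ x y, |f x - f y| ≤ L * |x - y|)
    (θ η : ℝ) : |f θ - f η| ≤ L * (π * |sin ((θ - η) / 2)|) := by
  obtain ⟨k, hk⟩ := exists_abs_sub_int_mul_two_pi_le_pi_mul_abs_sin_half (θ - η)
  calc |f θ - f η| = |f (θ - k * (2 * π)) - f η| := by rw [hf.sub_int_mul_eq]
    _ ≤ L * |θ - k * (2 * π) - η| := hlip _ _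
    _ ≤ L * (π * |sin ((θ - η) / 2)|) := by
      rw [sub_right_comm]; exact mul_le_mul_of_nonneg_left hk hL

theorem sq_le_four_mul_mul_of_abs_sq_sub_sq_le {a b c : ℝ} (ha : 0 ≤ a) (hc : 0 ≤ c)
    (haA : |a ^ 2 - b ^ 2| ≤ b ^ 2 / 2) (hcA : |c ^ 2 - b ^ 2| ≤ b ^ 2 / 2) :
    b ^ 2 ≤ 4 * a * c := by
  rw [abs_le] at haA hcA
  nlinarith [mul_nonneg ha hc, sq_nonneg (a * c - b ^ 2 / 2)]

theorem mul_abs_sin_half_le_norm_ofReal_mul_exp_sub {a b c : ℝ} (ha : 0 ≤ a) (hc : 0 ≤ c)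
    (haA : |a ^ 2 - b ^ 2| ≤ b ^ 2 / 2) (hcA : |c ^ 2 - b ^ 2| ≤ b ^ 2 / 2)
    (θ η : ℝ) :
    b * |sin ((θ - η) / 2)| ≤
      ‖(a : ℂ) * Complex.exp (Complex.I * θ) - c * Complex.exp (Complex.I * η)‖ := by
  refine (le_abs_self _).trans (abs_le_of_sq_le_sq ?_ (norm_nonneg _))
  rw [norm_ofReal_mul_exp_sub_sq, mul_pow, sq_abs]
  nlinarith [sq_le_four_mul_mul_of_abs_sq_sub_sq_le ha hc haA hcA, sq_nonneg (a - c),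
    sq_nonneg (sin ((θ - η) / 2))]

theorem norm_ofReal_mul_exp_sub_le {a b c : ℝ} (ha : 0 ≤ a) (hc : 0 ≤ c)
    (haA : |a ^ 2 - b ^ 2| ≤ b ^ 2 / 2) (hcA : |c ^ 2 - b ^ 2| ≤ b ^ 2 / 2)
    (hb : 0 < b) {θ η : ℝ}
    (hac : |a ^ 2 - c ^ 2| ≤ π / 2 * b ^ 2 * |sin ((θ - η) / 2)|) :
    ‖(a : ℂ) * Complex.exp (Complex.I * θ) - c * Complex.exp (Complex.I * η)‖ ≤
      3 * b * |sin ((θ - η) / 2)| := by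
  set s := |sin ((θ - η) / 2)|
  rw [abs_le] at haA hcA
  have hsum : b ≤ a + c := by nlinarith
  have hsub : |a - c| ≤ π / 2 * b * s := by
    refine le_of_mul_le_mul_right ?_ hb
    calc |a - c| * b ≤ |a - c| * (a + c) := mul_le_mul_of_nonneg_left hsum (abs_nonneg _)
      _ = |a ^ 2 - c ^ 2| := by
        rw [sq_sub_sq, abs_mul, abs_of_nonneg (by linarith : 0 ≤ a + c), mul_comm]
      _ ≤ π / 2 * b * s * b := by linarith
  have hsub_sq : (a - c) ^ 2 ≤ 3 * b ^ 2 * s ^ 2 := by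
    have hπ : π ^ 2 ≤ 12 := by nlinarith [pi_lt_d2, pi_pos]
    calc (a - c) ^ 2 = |a - c| ^ 2 := (sq_abs _).symm
      _ ≤ (π / 2 * b * s) ^ 2 := pow_le_pow_left₀ (abs_nonneg _) hsub 2
      _ = π ^ 2 / 4 * (b * s) ^ 2 := by ring
      _ ≤ 3 * b ^ 2 * s ^ 2 := by nlinarith [sq_nonneg (b * s)]
  refine abs_le_of_sq_le_sq' ?_ (by positivity) |>.2
  rw [norm_ofReal_mul_exp_sub_sq, ← sq_abs (sin _)]
  nlinarith [sq_nonneg (a - c), sq_nonneg s]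

/-- For `ε₀` small enough (depending only on `b`), any `2π`-periodic `C¹` perturbation `r`
with `‖r‖_{C¹} ≤ ε₀` and `R(θ) = √(b² + 2r(θ))` satisfies
`b|sin((θ-η)/2)| ≤ |R(θ)e^{iθ} - R(η)e^{iη}| ≤ 3b|sin((θ-η)/2)|`. -/
theorem stmt_19 (b : ℝ) (hb : 0 < b) :
    ∃ ε₀ > (0:ℝ), ∀ r : ℝ → ℝ, ContDiff ℝ 1 r →
      (∀ θ, r (θ + 2*π) = r θ) →
      (∀ θ, |r θ| ≤ ε₀) → (∀ θ, |deriv r θ| ≤ ε₀) →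
      ∀ θ η : ℝ,
        b * |Real.sin ((θ - η)/2)| ≤
          ‖((Real.sqrt (b^2 + 2 * r θ) : ℂ) * Complex.exp (Complex.I * θ)
            - (Real.sqrt (b^2 + 2 * r η) : ℂ) * Complex.exp (Complex.I * η))‖ ∧
        ‖((Real.sqrt (b^2 + 2 * r θ) : ℂ) * Complex.exp (Complex.I * θ)
            - (Real.sqrt (b^2 + 2 * r η) : ℂ) * Complex.exp (Complex.I * η))‖
          ≤ 3 * b * |Real.sin ((θ - η)/2)| := by
  refine ⟨b ^ 2 / 4, by positivity, fun r hr hper hr0 hr1 θ η => ?_⟩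
  have hlip : ∀ x y, |r x - r y| ≤ b ^ 2 / 4 * |x - y| := fun x y =>
    Convex.norm_image_sub_le_of_norm_deriv_le
      (fun z _ => (hr.differentiable one_ne_zero).differentiableAt) (fun z _ => hr1 z)
      convex_univ (Set.mem_univ y) (Set.mem_univ x)
  have hsq : ∀ x, √(b ^ 2 + 2 * r x) ^ 2 = b ^ 2 + 2 * r x := fun x =>
    sq_sqrt (by linarith [(abs_le.1 (hr0 x)).1, sq_nonneg b])
  have hnear : ∀ x, |√(b ^ 2 + 2 * r x) ^ 2 - b ^ 2| ≤ b ^ 2 / 2 := fun x => by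
    rw [hsq, add_sub_cancel_left, abs_mul, abs_two]; linarith [hr0 x]
  have hclose : |√(b ^ 2 + 2 * r θ) ^ 2 - √(b ^ 2 + 2 * r η) ^ 2|
      ≤ π / 2 * b ^ 2 * |sin ((θ - η) / 2)| := by
    rw [hsq, hsq, add_sub_add_left_eq_sub, ← mul_sub, abs_mul, abs_two]
    nlinarith [Function.Periodic.abs_sub_le_mul_pi_mul_abs_sin_half hper (by positivity) hlip θ η]
  exact ⟨mul_abs_sin_half_le_norm_ofReal_mul_exp_sub (sqrt_nonneg _) (sqrt_nonneg _)
      (hnear θ) (hnear η) θ η,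
    norm_ofReal_mul_exp_sub_le (sqrt_nonneg _) (sqrt_nonneg _) (hnear θ) (hnear η) hb hclose⟩
end
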